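/- Let F_{n,k} be the number of Frobenius seaweed data for sp_{2n} (up to swapping the two compositions) with exactly k central arcs. For a fixed m ∈ ℕ, the numbers F_{n,n−m} stabilize for n ≥ 2m+1: F_{n,n−m} = F_{2m+1,m+1} for all n ≥ 2m+1. -/

import Mathlib

/-- The arc of a block starting at offset `o` of size `m`: the `k`-th nested arc
joins vertices `o+k` and `o+(m-1-k)` (0-based), for `2k+1 < m`. -/
def inBlockArc (o m i j : ℕ) : Prop :=
  ∃ k : ℕ, 2 * k + 1 < m ∧ i = o + k ∧ j = o + (m - 1 - k)

/-- Arcs determined by a composition, drawn block by block starting at offset `o`. -/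
def arcs : List ℕ → ℕ → ℕ → ℕ → Prop
  | [], _, _, _ => False
  | m :: rest, o, i, j => inBlockArc o m i j ∨ arcs rest (o + m) i j

/-- The type-A meander graph of the pair of compositions `(a | b)` on `n` vertices
(0-based): arcs of `a` above the line, arcs of `b` below. -/
def meanderA (n : ℕ) (a b : List ℕ) : SimpleGraph (Fin n) where
  Adj i j := i ≠ j ∧ (arcs a 0 i.val j.val ∨ arcs a 0 j.val i.val ∨
      arcs b 0 i.val j.val ∨ arcs b 0 j.val i.val)
  symm := by
    constructor
    intro i j h
    exact ⟨Ne.symm h.1, by tauto⟩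
  loopless := by
    constructor
    intro i h
    exact h.1 rfl

/-- The symmetric composition `(a₁,…,a_s, 2d, a_s,…,a₁)` of `2n`, where
`d = n - Σ aᵢ` (a zero middle part is omitted). -/
def tildeComp (n : ℕ) (a : List ℕ) : List ℕ :=
  (a ++ [2 * (n - a.sum)] ++ a.reverse).filter (fun x => x != 0)

/-- The type-C meander graph `Γ^C_n(a|b)` on `2n` vertices. -/
def meanderC (n : ℕ) (a b : List ℕ) : SimpleGraph (Fin (2 * n)) :=
  meanderA (2 * n) (tildeComp n a) (tildeComp n b)

/-- The reflection `σ` sending vertex `i` to `2n + 1 - i` (0-based: `i ↦ 2n - 1 - i`). -/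
def sigmaRefl (n : ℕ) : Fin (2 * n) → Fin (2 * n) :=
  fun i => ⟨2 * n - 1 - i.val, by have := i.isLt; omega⟩

/-- A connected component is a cycle if every vertex in it has degree 2. -/
def IsCycleComp {V : Type*} (G : SimpleGraph V) (c : G.ConnectedComponent) : Prop :=
  ∀ v, G.connectedComponentMk v = c → (G.neighborSet v).ncard = 2

/-- A connected component is a segment if it is not a cycle. -/
def IsSegmentComp {V : Type*} (G : SimpleGraph V) (c : G.ConnectedComponent) : Prop :=
  ¬ IsCycleComp G c

/-- The number of cycles of a graph. -/
noncomputable def numCycles {V : Type*} (G : SimpleGraph V) : ℕ :=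
  {c : G.ConnectedComponent | IsCycleComp G c}.ncard

/-- The number of segments of a graph. -/
noncomputable def numSegments {V : Type*} (G : SimpleGraph V) : ℕ :=
  {c : G.ConnectedComponent | IsSegmentComp G c}.ncard

/-- A component of a type-C meander graph is `σ`-stable if `σ` maps it to itself. -/
def SigmaStable (n : ℕ) (G : SimpleGraph (Fin (2 * n))) (c : G.ConnectedComponent) : Prop :=
  ∀ v, G.connectedComponentMk v = c → G.connectedComponentMk (sigmaRefl n v) = c

/-- The number of non-`σ`-stable segments of `Γ^C_n(a|b)`. -/
noncomputable def numNonStableSegments (n : ℕ) (a b : List ℕ) : ℕ :=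
  {c : (meanderC n a b).ConnectedComponent |
    IsSegmentComp (meanderC n a b) c ∧ ¬ SigmaStable n (meanderC n a b) c}.ncard

/-- The topological index `T_n(a|b)` of `Γ^C_n(a|b)`:
(number of cycles) + ½·(number of non-`σ`-stable segments). -/
noncomputable def topIndex (n : ℕ) (a b : List ℕ) : ℚ :=
  (numCycles (meanderC n a b) : ℚ) + (numNonStableSegments n a b : ℚ) / 2

/-- A composition: all parts are positive. -/
def IsComposition (a : List ℕ) : Prop := ∀ x ∈ a, 0 < x

/-- A Frobenius seaweed datum for `sp_{2n}` whose meander graph has `k` central arcs: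
one of the compositions sums to `n`, the other to `n - k`, and `T_n(a|b) = 0`. -/
def FrobDatum (n k : ℕ) (a b : List ℕ) : Prop :=
  IsComposition a ∧ IsComposition b ∧ 1 ≤ k ∧ k ≤ n ∧
    ((a.sum = n - k ∧ b.sum = n) ∨ (b.sum = n - k ∧ a.sum = n)) ∧
    topIndex n a b = 0

/-- Frobenius seaweed data with `k` central arcs, up to swapping the two compositions. -/
def FSet (n k : ℕ) : Set (Sym2 (List ℕ)) :=
  {s | ∃ a b, s = s(a, b) ∧ FrobDatum n k a b}

/-- The number `F_{n,k}` of Frobenius seaweed data with `k` central arcs, up to swap. -/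
noncomputable def Fcount (n k : ℕ) : ℕ := (FSet n k).ncard

/-!
Write a Frobenius datum with `n - m` central arcs as `(a | b)` with `Σ a = m` and `Σ b = n`.
If `n ≥ 2m + 2`, the last part of `b` is `1`: otherwise the innermost arc of its last block,
its mirror image, and the two central arcs of `ã` through their ends form a cycle, which a
meander of index `0` cannot contain. Passing from `(a | b)` at rank `n` to `(a | b, 1)` at
rank `n + 1` only inserts two central vertices joined by a single arc, a `σ`-stable segment,
so cycles and non-`σ`-stable segments are unchanged. Hence `(a | b) ↦ (a | b, 1)` is a
bijection between the data counted by `F_{n,n-m}` and by `F_{n+1,n+1-m}`.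
-/

lemma inBlockArc_iff {o c i j : ℕ} :
    inBlockArc o c i j ↔ o ≤ i ∧ i < j ∧ i + j + 1 = 2 * o + c := by
  constructor
  · rintro ⟨k, hk, rfl, rfl⟩
    omega
  · rintro ⟨hoi, hij, hsum⟩
    exact ⟨i - o, by omega, by omega, by omega⟩

lemma arcs_cons {c : ℕ} {l : List ℕ} {o i j : ℕ} :
    arcs (c :: l) o i j ↔ inBlockArc o c i j ∨ arcs l (o + c) i j :=
  Iff.rfl

lemma arcs_bounds {l : List ℕ} {o i j : ℕ} (h : arcs l o i j) :
    o ≤ i ∧ i < j ∧ j < o + l.sum := by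
  induction l generalizing o with
  | nil => exact h.elim
  | cons c l ih =>
    rw [List.sum_cons]
    rcases h with h | h
    · rw [inBlockArc_iff] at h
      omega
    · have := ih h
      omega

lemma arcs_append {l₁ l₂ : List ℕ} {o i j : ℕ} :
    arcs (l₁ ++ l₂) o i j ↔ arcs l₁ o i j ∨ arcs l₂ (o + l₁.sum) i j := by
  induction l₁ generalizing o with
  | nil => simp [arcs]
  | cons c l ih =>
    simp only [List.cons_append, arcs_cons, ih, List.sum_cons, Nat.add_assoc, or_assoc]

lemma arcs_add_right {l : List ℕ} {o c i j : ℕ} :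
    arcs l (o + c) (i + c) (j + c) ↔ arcs l o i j := by
  induction l generalizing o with
  | nil => exact Iff.rfl
  | cons d l ih =>
    rw [arcs_cons, arcs_cons, Nat.add_right_comm o c d, ih, inBlockArc_iff, inBlockArc_iff]
    exact or_congr_left (by omega)

lemma arcs_filter_ne_zero {l : List ℕ} {o i j : ℕ} :
    arcs (l.filter (fun x => x != 0)) o i j ↔ arcs l o i j := by
  induction l generalizing o with
  | nil => exact Iff.rfl
  | cons c l ih =>
    by_cases hc : c = 0
    · subst hc
      rw [List.filter_cons_of_neg (by simp), ih, arcs_cons, Nat.add_zero, inBlockArc_iff]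
      exact (or_iff_right (by omega)).symm
    · simp [hc, arcs_cons, ih]

lemma arcs_unique {l : List ℕ} {o i j i' j' : ℕ} (h : arcs l o i j) (h' : arcs l o i' j')
    (hv : i = i' ∨ i = j' ∨ j = i' ∨ j = j') : i = i' ∧ j = j' := by
  induction l generalizing o with
  | nil => exact h.elim
  | cons c l ih =>
    rcases h with h | h <;> rcases h' with h' | h'
    · rw [inBlockArc_iff] at h h'
      omega
    · have := arcs_bounds h'
      rw [inBlockArc_iff] at h
      omega
    · have := arcs_bounds h
      rw [inBlockArc_iff] at h'
      omega
    · exact ih h h'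

lemma arcs_tildeComp {n : ℕ} {c : List ℕ} {i j : ℕ} :
    arcs (tildeComp n c) 0 i j ↔ arcs c 0 i j ∨ inBlockArc c.sum (2 * (n - c.sum)) i j ∨
      arcs c.reverse (c.sum + 2 * (n - c.sum)) i j := by
  simp [tildeComp, arcs_filter_ne_zero, arcs_append, arcs_cons]

def ArcJoins (l : List ℕ) (i j : ℕ) : Prop := arcs l 0 i j ∨ arcs l 0 j i

lemma ArcJoins.symm {l : List ℕ} {i j : ℕ} (h : ArcJoins l i j) : ArcJoins l j i := Or.symm h

lemma ArcJoins.ne {l : List ℕ} {i j : ℕ} (h : ArcJoins l i j) : i ≠ j := by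
  rcases h with h | h <;> have := arcs_bounds h <;> omega

lemma ArcJoins.unique {l : List ℕ} {i j j' : ℕ} (h : ArcJoins l i j) (h' : ArcJoins l i j') :
    j = j' := by
  rcases h with h | h <;> rcases h' with h' | h' <;>
    have := arcs_unique h h' (by omega) <;> have := arcs_bounds h <;> have := arcs_bounds h' <;>
    omega

lemma meanderA_adj_iff {n : ℕ} {a b : List ℕ} {u v : Fin n} :
    (meanderA n a b).Adj u v ↔ ArcJoins a u v ∨ ArcJoins b u v := by
  refine ⟨fun h => by unfold ArcJoins; exact or_assoc.2 h.2,
    fun h => ⟨Fin.ne_of_val_ne (h.elim ArcJoins.ne ArcJoins.ne), or_assoc.1 h⟩⟩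

lemma meanderA_neighborSet_eq_pair {n : ℕ} {a b : List ℕ} {v p q : Fin n}
    (ha : ArcJoins a v p) (hb : ArcJoins b v q) : (meanderA n a b).neighborSet v = {p, q} := by
  ext w
  simp only [SimpleGraph.mem_neighborSet, meanderA_adj_iff, Set.mem_insert_iff,
    Set.mem_singleton_iff]
  constructor
  · rintro (h | h)
    · exact Or.inl (Fin.ext (ha.unique h).symm)
    · exact Or.inr (Fin.ext (hb.unique h).symm)
  · rintro (rfl | rfl)
    exacts [Or.inl ha, Or.inr hb]

lemma meanderA_adj_iff_eq {n : ℕ} {a b : List ℕ} {v p w : Fin n} (ha : ArcJoins a v p)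
    (hb : ∀ q, ¬ ArcJoins b v q) : (meanderA n a b).Adj v w ↔ w = p := by
  rw [meanderA_adj_iff, or_iff_left (hb w)]
  exact ⟨fun h => Fin.ext (ha.unique h).symm, fun h => h ▸ ha⟩

lemma arcJoins_tildeComp_sigmaRefl {n : ℕ} {c : List ℕ} {x : Fin (2 * n)} (h₁ : c.sum ≤ x)
    (h₂ : x + c.sum < 2 * n) : ArcJoins (tildeComp n c) x (sigmaRefl n x) := by
  have hσ : (sigmaRefl n x : ℕ) = 2 * n - 1 - x := rfl
  have hmid {i j : ℕ} (hi : c.sum ≤ i) (hij : i < j) (hs : i + j + 1 = 2 * n) :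
      arcs (tildeComp n c) 0 i j :=
    arcs_tildeComp.2 (Or.inr (Or.inl (inBlockArc_iff.2 ⟨hi, hij, by omega⟩)))
  rcases lt_or_ge (x : ℕ) n with hx | hx
  · exact Or.inl (hmid h₁ (by omega) (by omega))
  · exact Or.inr (hmid (by omega) (by omega) (by omega))

namespace SimpleGraph

variable {V W : Type*} {G : SimpleGraph V} {H : SimpleGraph W}

def IsAdjClosed (G : SimpleGraph V) (S : Set V) : Prop := ∀ v ∈ S, ∀ w, G.Adj v w → w ∈ S

lemma IsAdjClosed.mem_of_reachable {S : Set V} (hS : G.IsAdjClosed S) {v w : V} (hv : v ∈ S)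
    (h : G.Reachable v w) : w ∈ S := by
  by_contra hw
  obtain ⟨p⟩ := h
  obtain ⟨d, -, hd₁, hd₂⟩ := p.exists_boundary_dart S hv hw
  exact hd₂ (hS _ hd₁ _ d.adj)

lemma isCycleComp_of_square {v₁ v₂ v₃ v₄ : V} (h₁ : G.neighborSet v₁ = {v₂, v₄})
    (h₂ : G.neighborSet v₂ = {v₁, v₃}) (h₃ : G.neighborSet v₃ = {v₄, v₂})
    (h₄ : G.neighborSet v₄ = {v₃, v₁}) (h₁₃ : v₁ ≠ v₃) (h₂₄ : v₂ ≠ v₄) :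
    IsCycleComp G (G.connectedComponentMk v₁) := by
  have hS : G.IsAdjClosed {v₁, v₂, v₃, v₄} := by
    rintro v hv w hw
    rw [← mem_neighborSet] at hw
    rcases hv with rfl | rfl | rfl | rfl <;>
      simp only [h₁, h₂, h₃, h₄, Set.mem_insert_iff, Set.mem_singleton_iff] at hw ⊢ <;>
      tauto
  intro w hw
  rcases hS.mem_of_reachable (by simp) (ConnectedComponent.exact hw.symm) with
    rfl | rfl | rfl | rfl
  · rw [h₁, Set.ncard_pair h₂₄]
  · rw [h₂, Set.ncard_pair h₁₃]
  · rw [h₃, Set.ncard_pair h₂₄.symm]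
  · rw [h₄, Set.ncard_pair h₁₃.symm]

/-- `SigmaStable n G` is `IsStableComp G (sigmaRefl n)`. -/
def IsStableComp (G : SimpleGraph V) (σ : V → V) (c : G.ConnectedComponent) : Prop :=
  ∀ v, G.connectedComponentMk v = c → G.connectedComponentMk (σ v) = c

namespace Embedding

variable (f : H ↪g G) (hf : G.IsAdjClosed (Set.range f))
include hf

lemma exists_eq_of_reachable {u : W} {w : V} (h : G.Reachable (f u) w) :
    ∃ v, f v = w ∧ H.Reachable u v := by
  refine IsAdjClosed.mem_of_reachable (S := {w | ∃ v, f v = w ∧ H.Reachable u v}) ?_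
    ⟨u, rfl, Reachable.refl u⟩ h
  rintro _ ⟨v, rfl, hv⟩ w hw
  obtain ⟨v', rfl⟩ := hf _ ⟨v, rfl⟩ w hw
  exact ⟨v', rfl, hv.trans (f.map_adj_iff.1 hw).reachable⟩

lemma reachable_iff {u v : W} : G.Reachable (f u) (f v) ↔ H.Reachable u v := by
  refine ⟨fun h => ?_, fun h => h.map f.toHom⟩
  obtain ⟨v', hv', h⟩ := f.exists_eq_of_reachable hf h
  rwa [← f.injective hv']

lemma map_connectedComponent_injective :
    Function.Injective (ConnectedComponent.map f.toHom) := by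
  intro c d
  induction c using ConnectedComponent.ind
  induction d using ConnectedComponent.ind
  simp only [ConnectedComponent.map_mk, ConnectedComponent.eq]
  exact (f.reachable_iff hf).1

lemma forall_mem_map_iff (c : H.ConnectedComponent) (P : V → Prop) :
    (∀ w, G.connectedComponentMk w = c.map f.toHom → P w) ↔
      ∀ v, H.connectedComponentMk v = c → P (f v) := by
  induction c using ConnectedComponent.ind with | h u => ?_
  simp only [ConnectedComponent.map_mk, ConnectedComponent.eq]
  refine ⟨fun h v hv => h _ (hv.map f.toHom), fun h w hw => ?_⟩
  obtain ⟨v, rfl, hv⟩ := f.exists_eq_of_reachable hf hw.symm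
  exact h v hv.symm

lemma neighborSet_apply (v : W) : G.neighborSet (f v) = f '' H.neighborSet v := by
  ext w
  refine ⟨fun hw => ?_, ?_⟩
  · obtain ⟨u, rfl⟩ := hf _ ⟨v, rfl⟩ w hw
    exact ⟨u, f.map_adj_iff.1 hw, rfl⟩
  · rintro ⟨u, hu, rfl⟩
    exact f.map_adj_iff.2 hu

lemma isCycleComp_map_iff (c : H.ConnectedComponent) :
    IsCycleComp G (c.map f.toHom) ↔ IsCycleComp H c := by
  unfold IsCycleComp
  rw [f.forall_mem_map_iff hf]
  simp only [f.neighborSet_apply hf, Set.ncard_image_of_injective _ f.injective]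

lemma isStableComp_map_iff {σG : V → V} {σH : W → W} (hσ : ∀ v, σG (f v) = f (σH v))
    (c : H.ConnectedComponent) :
    IsStableComp G σG (c.map f.toHom) ↔ IsStableComp H σH c := by
  unfold IsStableComp
  rw [f.forall_mem_map_iff hf]
  induction c using ConnectedComponent.ind with | h u => ?_
  simp only [hσ, ConnectedComponent.map_mk, ConnectedComponent.eq]
  exact forall_congr' fun v => imp_congr_right fun _ => f.reachable_iff hf

lemma ncard_setOf_eq {P : G.ConnectedComponent → Prop} {Q : H.ConnectedComponent → Prop}
    (hPQ : ∀ c, P (c.map f.toHom) ↔ Q c)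
    (hout : ∀ x ∉ Set.range f, ¬ P (G.connectedComponentMk x)) :
    {c | P c}.ncard = {c | Q c}.ncard := by
  rw [← Set.ncard_image_of_injective _ (f.map_connectedComponent_injective hf)]
  congr 1
  ext c
  induction c using ConnectedComponent.ind with | h x => ?_
  refine ⟨fun hx => ?_, ?_⟩
  · by_cases hxf : x ∈ Set.range f
    · obtain ⟨u, rfl⟩ := hxf
      exact ⟨H.connectedComponentMk u, (hPQ _).1 hx, rfl⟩
    · exact absurd hx (hout x hxf)
  · rintro ⟨d, hd, hdx⟩
    exact hdx ▸ (hPQ d).2 hd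

lemma numCycles_eq (hout : ∀ x ∉ Set.range f, (G.neighborSet x).ncard ≠ 2) :
    numCycles G = numCycles H :=
  f.ncard_setOf_eq hf (f.isCycleComp_map_iff hf) fun x hx hc => hout x hx (hc x rfl)

end Embedding

end SimpleGraph

/-- Renumbering of the vertices `0, …, 2n-1` that leaves room for two new central vertices
`n` and `n + 1`. -/
def skipTwo (n x : ℕ) : ℕ := if x < n then x else x + 2

lemma arcs_skipTwo_of_le {l : List ℕ} {n o i j : ℕ} (h : o + l.sum ≤ n) :
    arcs l o (skipTwo n i) (skipTwo n j) ↔ arcs l o i j := by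
  have key (x : ℕ) (hx : skipTwo n x < n ∨ x < n) : skipTwo n x = x := by
    unfold skipTwo at *; split_ifs at * <;> omega
  constructor
  · intro hl
    have := arcs_bounds hl
    rwa [key i (by omega), key j (by omega)] at hl
  · intro hl
    have := arcs_bounds hl
    rwa [key i (by omega), key j (by omega)]

lemma arcs_skipTwo_of_ge {l : List ℕ} {n o i j : ℕ} (h : n ≤ o) :
    arcs l (o + 2) (skipTwo n i) (skipTwo n j) ↔ arcs l o i j := by
  have key (x : ℕ) (hx : n + 2 ≤ skipTwo n x ∨ n ≤ x) : skipTwo n x = x + 2 := by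
    unfold skipTwo at *; split_ifs at * <;> omega
  constructor
  · intro hl
    have := arcs_bounds hl
    rw [key i (by omega), key j (by omega)] at hl
    exact arcs_add_right.1 hl
  · intro hl
    have := arcs_bounds hl
    rw [key i (by omega), key j (by omega)]
    exact arcs_add_right.2 hl

lemma inBlockArc_skipTwo {n o c i j : ℕ} (h : 2 * n = 2 * o + c) :
    inBlockArc o (c + 2) (skipTwo n i) (skipTwo n j) ↔ inBlockArc o c i j := by
  rw [inBlockArc_iff, inBlockArc_iff]
  unfold skipTwo
  split_ifs <;> omega

lemma arcs_tildeComp_succ_skipTwo {n : ℕ} {c : List ℕ} {i j : ℕ} (h : c.sum ≤ n) :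
    arcs (tildeComp (n + 1) c) 0 (skipTwo n i) (skipTwo n j) ↔ arcs (tildeComp n c) 0 i j := by
  have hmid : 2 * (n + 1 - c.sum) = 2 * (n - c.sum) + 2 := by omega
  rw [arcs_tildeComp, arcs_tildeComp, hmid, ← Nat.add_assoc, arcs_skipTwo_of_le (by omega),
    inBlockArc_skipTwo (by omega), arcs_skipTwo_of_ge (by omega)]

lemma arcs_tildeComp_append_one {n : ℕ} {b : List ℕ} {i j : ℕ} (h : b.sum = n) :
    arcs (tildeComp (n + 1) (b ++ [1])) 0 i j ↔ arcs b 0 i j ∨ arcs b.reverse (n + 2) i j := by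
  have h₀ (o : ℕ) : ¬ inBlockArc o 0 i j := by rw [inBlockArc_iff]; omega
  have h₁ (o : ℕ) : ¬ inBlockArc o 1 i j := by rw [inBlockArc_iff]; omega
  simp [arcs_tildeComp, arcs_append, arcs_cons, arcs, h, h₀, h₁]

lemma arcs_tildeComp_append_one_skipTwo {n : ℕ} {b : List ℕ} {i j : ℕ} (h : b.sum = n) :
    arcs (tildeComp (n + 1) (b ++ [1])) 0 (skipTwo n i) (skipTwo n j) ↔
      arcs (tildeComp n b) 0 i j := by
  have h₀ : ¬ inBlockArc n 0 i j := by rw [inBlockArc_iff]; omega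
  rw [arcs_tildeComp_append_one h, arcs_tildeComp, h, arcs_skipTwo_of_le (by omega),
    arcs_skipTwo_of_ge le_rfl]
  simp only [Nat.sub_self, Nat.mul_zero, Nat.add_zero, h₀, false_or]

lemma not_arcJoins_tildeComp_append_one {n : ℕ} {b : List ℕ} {i j : ℕ} (h : b.sum = n)
    (hi : i = n ∨ i = n + 1) : ¬ ArcJoins (tildeComp (n + 1) (b ++ [1])) i j := by
  have hr : b.reverse.sum = n := by rw [List.sum_reverse, h]
  rintro (hij | hij) <;> rcases (arcs_tildeComp_append_one h).1 hij with hb | hb <;>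
    have := arcs_bounds hb <;> omega

def skipTwoFin (n : ℕ) (v : Fin (2 * n)) : Fin (2 * (n + 1)) :=
  ⟨skipTwo n v, by unfold skipTwo; split_ifs <;> omega⟩

@[simp] lemma skipTwoFin_val (n : ℕ) (v : Fin (2 * n)) : (skipTwoFin n v : ℕ) = skipTwo n v :=
  rfl

lemma skipTwoFin_injective (n : ℕ) : Function.Injective (skipTwoFin n) := by
  intro u v huv
  have := congrArg Fin.val huv
  simp only [skipTwoFin_val, skipTwo] at this
  ext
  split_ifs at this <;> omega

lemma mem_range_skipTwoFin_iff {n : ℕ} {x : Fin (2 * (n + 1))} :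
    x ∈ Set.range (skipTwoFin n) ↔ (x : ℕ) ≠ n ∧ (x : ℕ) ≠ n + 1 := by
  constructor
  · rintro ⟨v, rfl⟩
    simp only [skipTwoFin_val, skipTwo]
    split_ifs <;> omega
  · intro hx
    by_cases hxn : (x : ℕ) < n
    · exact ⟨⟨x, by omega⟩, Fin.ext (if_pos hxn)⟩
    · refine ⟨⟨x - 2, by omega⟩, Fin.ext ?_⟩
      simp only [skipTwoFin_val, skipTwo]
      split_ifs <;> omega

lemma sigmaRefl_skipTwoFin (n : ℕ) (v : Fin (2 * n)) :
    sigmaRefl (n + 1) (skipTwoFin n v) = skipTwoFin n (sigmaRefl n v) := by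
  ext
  simp only [sigmaRefl, skipTwoFin_val, skipTwo]
  split_ifs <;> omega

section Step

variable {n : ℕ} {a b : List ℕ} (ha : a.sum ≤ n) (hb : b.sum = n)
include ha hb

def meanderSkipTwo : meanderC n a b ↪g meanderC (n + 1) a (b ++ [1]) where
  toFun := skipTwoFin n
  inj' := skipTwoFin_injective n
  map_rel_iff' {u v} := by
    simp only [meanderC, meanderA_adj_iff, ArcJoins, Function.Embedding.coeFn_mk,
      skipTwoFin_val, arcs_tildeComp_succ_skipTwo ha, arcs_tildeComp_append_one_skipTwo hb]

lemma meanderC_succ_adj_iff_of_centre {x w : Fin (2 * (n + 1))}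
    (hx : (x : ℕ) = n ∨ x = n + 1) :
    (meanderC (n + 1) a (b ++ [1])).Adj x w ↔ w = sigmaRefl (n + 1) x :=
  meanderA_adj_iff_eq (arcJoins_tildeComp_sigmaRefl (by omega) (by omega))
    fun _ => not_arcJoins_tildeComp_append_one hb hx

@[simp] lemma coe_meanderSkipTwo : ⇑(meanderSkipTwo ha hb) = skipTwoFin n :=
  rfl

lemma isAdjClosed_range_meanderSkipTwo :
    (meanderC (n + 1) a (b ++ [1])).IsAdjClosed (Set.range (meanderSkipTwo ha hb)) := by
  rintro _ ⟨v, rfl⟩ w hw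
  rw [coe_meanderSkipTwo] at hw ⊢
  rw [mem_range_skipTwoFin_iff]
  by_contra hw'
  have hvw := (meanderC_succ_adj_iff_of_centre ha hb (by omega)).1 hw.symm
  have hv := mem_range_skipTwoFin_iff.1 ⟨v, rfl⟩
  rw [hvw] at hv
  simp only [sigmaRefl] at hv
  omega

lemma neighborSet_meanderC_succ_of_centre {x : Fin (2 * (n + 1))}
    (hx : (x : ℕ) = n ∨ x = n + 1) :
    (meanderC (n + 1) a (b ++ [1])).neighborSet x = {sigmaRefl (n + 1) x} := by
  ext w
  exact meanderC_succ_adj_iff_of_centre ha hb hx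

lemma isStableComp_meanderC_succ_of_centre {x : Fin (2 * (n + 1))}
    (hx : (x : ℕ) = n ∨ x = n + 1) :
    (meanderC (n + 1) a (b ++ [1])).IsStableComp (sigmaRefl (n + 1))
      ((meanderC (n + 1) a (b ++ [1])).connectedComponentMk x) := by
  set G := meanderC (n + 1) a (b ++ [1])
  have hσ (y : Fin (2 * (n + 1))) : (sigmaRefl (n + 1) y : ℕ) = 2 * (n + 1) - 1 - y := rfl
  have hcentres : G.IsAdjClosed {y | (y : ℕ) = n ∨ y = n + 1} := by
    intro y (hy : (y : ℕ) = n ∨ y = n + 1) w hw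
    show (w : ℕ) = n ∨ w = n + 1
    rw [(meanderC_succ_adj_iff_of_centre ha hb hy).1 hw, hσ]
    omega
  have hreach {y z : Fin (2 * (n + 1))} (hy : (y : ℕ) = n ∨ y = n + 1)
      (hz : (z : ℕ) = n ∨ z = n + 1) : G.Reachable y z := by
    rcases (show z = y ∨ z = sigmaRefl (n + 1) y by simp only [Fin.ext_iff, hσ]; omega) with
      rfl | rfl
    · rfl
    · exact ((meanderC_succ_adj_iff_of_centre ha hb hy).2 rfl).reachable
  intro w hw
  have hw' : (w : ℕ) = n ∨ w = n + 1 :=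
    hcentres.mem_of_reachable hx (SimpleGraph.ConnectedComponent.exact hw.symm)
  exact SimpleGraph.ConnectedComponent.sound (hreach (by rw [hσ]; omega) hx)

lemma topIndex_succ_append_one : topIndex (n + 1) a (b ++ [1]) = topIndex n a b := by
  set f := meanderSkipTwo ha hb
  have hf := isAdjClosed_range_meanderSkipTwo ha hb
  have hcentre (x) (hx : x ∉ Set.range f) : (x : ℕ) = n ∨ x = n + 1 := by
    rw [coe_meanderSkipTwo, mem_range_skipTwoFin_iff] at hx
    omega
  have hcycles : numCycles (meanderC (n + 1) a (b ++ [1])) = numCycles (meanderC n a b) :=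
    f.numCycles_eq hf fun x hx => by
      rw [neighborSet_meanderC_succ_of_centre ha hb (hcentre x hx), Set.ncard_singleton]
      omega
  have hsegments : numNonStableSegments (n + 1) a (b ++ [1]) = numNonStableSegments n a b :=
    f.ncard_setOf_eq hf
      (fun c => and_congr (not_congr (f.isCycleComp_map_iff hf c))
        (not_congr (f.isStableComp_map_iff hf (sigmaRefl_skipTwoFin n) c)))
      fun x hx h => h.2 (isStableComp_meanderC_succ_of_centre ha hb (hcentre x hx))
  rw [topIndex, topIndex, hcycles, hsegments]

end Step

lemma not_isCycleComp_of_topIndex_eq_zero {n : ℕ} {a b : List ℕ} (h : topIndex n a b = 0)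
    (c : (meanderC n a b).ConnectedComponent) : ¬ IsCycleComp (meanderC n a b) c := by
  have hcycles : numCycles (meanderC n a b) = 0 := by
    unfold topIndex at h
    have h₁ : (0 : ℚ) ≤ numCycles (meanderC n a b) := Nat.cast_nonneg _
    have h₂ : (0 : ℚ) ≤ numNonStableSegments n a b := Nat.cast_nonneg _
    exact_mod_cast (by linarith : (numCycles (meanderC n a b) : ℚ) = 0)
  rw [numCycles, Set.ncard_eq_zero (Set.toFinite _)] at hcycles
  exact fun hc => hcycles.subset hc

/-- When `n ≥ 2m + 2`, the innermost arc `(i, j)` of the last block of `b` lies in the central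
block of `ã`, which joins `i` and `j` to their mirror images; with the mirrored arc of `b̃` this
closes the cycle `i, σ i, σ j, j`. -/
lemma exists_isCycleComp_of_last_ge_two {n m s : ℕ} {a b : List ℕ} (hsa : a.sum = m)
    (hsb : (b ++ [s]).sum = n) (hs : 2 ≤ s) (hn : 2 * m + 2 ≤ n) :
    ∃ c, IsCycleComp (meanderC n a (b ++ [s])) c := by
  have hbs : b.sum + s = n := by simpa using hsb
  set k := (s - 2) / 2
  let i : Fin (2 * n) := ⟨n - s + k, by omega⟩
  let j : Fin (2 * n) := ⟨n - 1 - k, by omega⟩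
  have hi : (i : ℕ) = n - s + k := rfl
  have hj : (j : ℕ) = n - 1 - k := rfl
  have hσ (x : Fin (2 * n)) : (sigmaRefl n x : ℕ) = 2 * n - 1 - x := rfl
  have hai : ArcJoins (tildeComp n a) i (sigmaRefl n i) :=
    arcJoins_tildeComp_sigmaRefl (by omega) (by omega)
  have haj : ArcJoins (tildeComp n a) j (sigmaRefl n j) :=
    arcJoins_tildeComp_sigmaRefl (by omega) (by omega)
  have hbij : ArcJoins (tildeComp n (b ++ [s])) i j := by
    refine Or.inl (arcs_tildeComp.2 (Or.inl (arcs_append.2 (Or.inr (Or.inl ?_)))))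
    rw [inBlockArc_iff]
    omega
  have hbσ : ArcJoins (tildeComp n (b ++ [s])) (sigmaRefl n i) (sigmaRefl n j) := by
    refine Or.inr (arcs_tildeComp.2 (Or.inr (Or.inr ?_)))
    rw [hsb, List.reverse_append, hσ, hσ]
    exact Or.inl (inBlockArc_iff.2 (by omega))
  refine ⟨_, SimpleGraph.isCycleComp_of_square (v₁ := i) (v₂ := sigmaRefl n i)
    (v₃ := sigmaRefl n j) (v₄ := j) ?_ ?_ ?_ ?_ ?_ ?_⟩
  · exact meanderA_neighborSet_eq_pair hai hbij
  · exact meanderA_neighborSet_eq_pair hai.symm hbσ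
  · exact meanderA_neighborSet_eq_pair haj.symm hbσ.symm
  · exact meanderA_neighborSet_eq_pair haj hbij.symm
  · exact Fin.ne_of_val_ne (by rw [hσ]; omega)
  · exact Fin.ne_of_val_ne (by rw [hσ]; omega)

lemma isComposition_append_singleton {b : List ℕ} {s : ℕ} :
    IsComposition (b ++ [s]) ↔ IsComposition b ∧ 0 < s := by
  simp [IsComposition, or_imp, forall_and]

lemma exists_eq_append_one_of_topIndex_eq_zero {n m : ℕ} {a b : List ℕ} (hb : IsComposition b)
    (hsa : a.sum = m) (hsb : b.sum = n) (hn : 2 * m + 2 ≤ n) (h : topIndex n a b = 0) :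
    ∃ b', b = b' ++ [1] := by
  obtain ⟨b', s, rfl⟩ : ∃ b' s, b = b' ++ [s] := by
    rcases List.eq_nil_or_concat b with rfl | ⟨b', s, rfl⟩
    · rw [List.sum_nil] at hsb
      omega
    · exact ⟨b', s, List.concat_eq_append⟩
  have hs₀ := (isComposition_append_singleton.1 hb).2
  rcases (show s = 1 ∨ 2 ≤ s by omega) with rfl | hs₂
  · exact ⟨b', rfl⟩
  · obtain ⟨c, hc⟩ := exists_isCycleComp_of_last_ge_two hsa hsb hs₂ hn
    exact absurd hc (not_isCycleComp_of_topIndex_eq_zero h c)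

def IsNormalFrobDatum (n m : ℕ) (a b : List ℕ) : Prop :=
  IsComposition a ∧ IsComposition b ∧ a.sum = m ∧ b.sum = n ∧ topIndex n a b = 0

lemma topIndex_comm (n : ℕ) (a b : List ℕ) : topIndex n a b = topIndex n b a := by
  have : meanderC n a b = meanderC n b a := by
    ext i j
    simp only [meanderC, meanderA]
    tauto
  rw [topIndex, topIndex, numNonStableSegments, numNonStableSegments, this]

lemma frobDatum_sub_iff {n m : ℕ} {a b : List ℕ} (hm : m < n) :
    FrobDatum n (n - m) a b ↔ IsNormalFrobDatum n m a b ∨ IsNormalFrobDatum n m b a := by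
  unfold FrobDatum IsNormalFrobDatum
  rw [topIndex_comm n b a, Nat.sub_sub_self hm.le]
  constructor
  · rintro ⟨ha, hb, -, -, (⟨hsa, hsb⟩ | ⟨hsb, hsa⟩), h⟩
    exacts [Or.inl ⟨ha, hb, hsa, hsb, h⟩, Or.inr ⟨hb, ha, hsb, hsa, h⟩]
  · rintro (⟨ha, hb, hsa, hsb, h⟩ | ⟨hb, ha, hsb, hsa, h⟩)
    exacts [⟨ha, hb, by omega, by omega, Or.inl ⟨hsa, hsb⟩, h⟩,
      ⟨ha, hb, by omega, by omega, Or.inr ⟨hsb, hsa⟩, h⟩]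

lemma Fcount_sub_eq_ncard {n m : ℕ} (hm : m < n) :
    Fcount n (n - m) = {p : List ℕ × List ℕ | IsNormalFrobDatum n m p.1 p.2}.ncard := by
  have hFSet : FSet n (n - m) =
      (fun p : List ℕ × List ℕ => s(p.1, p.2)) '' {p | IsNormalFrobDatum n m p.1 p.2} := by
    ext t
    simp only [FSet, frobDatum_sub_iff hm, Set.mem_image, Set.mem_ofPred_eq, Prod.exists]
    constructor
    · rintro ⟨a, b, rfl, h | h⟩
      exacts [⟨a, b, h, rfl⟩, ⟨b, a, h, Sym2.eq_swap⟩]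
    · rintro ⟨a, b, h, rfl⟩
      exact ⟨a, b, rfl, Or.inl h⟩
  rw [Fcount, hFSet]
  refine Set.InjOn.ncard_image ?_
  rintro ⟨a, b⟩ ⟨-, -, ha, hb, -⟩ ⟨a', b'⟩ ⟨-, -, ha', hb', -⟩ h
  dsimp only at ha hb ha' hb' h
  rcases Sym2.eq_iff.1 h with ⟨rfl, rfl⟩ | ⟨rfl, -⟩
  · rfl
  · omega

lemma setOf_isNormalFrobDatum_succ {n m : ℕ} (hn : 2 * m + 1 ≤ n) :
    {p : List ℕ × List ℕ | IsNormalFrobDatum (n + 1) m p.1 p.2} =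
      (Prod.map id (· ++ [1])) '' {p | IsNormalFrobDatum n m p.1 p.2} := by
  ext ⟨a, b⟩
  simp only [Set.mem_ofPred_eq, Set.mem_image, Prod.exists, Prod.map, id, Prod.mk.injEq]
  constructor
  · rintro ⟨ha, hb, hsa, hsb, h⟩
    obtain ⟨b', rfl⟩ := exists_eq_append_one_of_topIndex_eq_zero hb hsa hsb (by omega) h
    have hsb' : b'.sum = n := by simpa using hsb
    rw [topIndex_succ_append_one (by omega) hsb'] at h
    exact ⟨a, b', ⟨ha, (isComposition_append_singleton.1 hb).1, hsa, hsb', h⟩, rfl, rfl⟩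
  · rintro ⟨a, b', ⟨ha, hb', hsa, hsb', h⟩, rfl, rfl⟩
    exact ⟨ha, isComposition_append_singleton.2 ⟨hb', Nat.one_pos⟩, hsa, by simp [hsb'],
      by rwa [topIndex_succ_append_one (by omega) hsb']⟩

lemma Fcount_succ_sub {n m : ℕ} (hn : 2 * m + 1 ≤ n) :
    Fcount (n + 1) (n + 1 - m) = Fcount n (n - m) := by
  rw [Fcount_sub_eq_ncard (by omega), Fcount_sub_eq_ncard (by omega),
    setOf_isNormalFrobDatum_succ hn, Set.ncard_image_of_injective]
  exact Function.injective_id.prodMap fun _ _ => List.append_cancel_right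

/-- For fixed `m`, the numbers `F_{n,n-m}` stabilise for `n ≥ 2m + 1`. -/
theorem Fcount_stabilises (m n : ℕ) (hn : 2 * m + 1 ≤ n) :
    Fcount n (n - m) = Fcount (2 * m + 1) (m + 1) := by
  induction n, hn using Nat.le_induction with
  | base => rw [show 2 * m + 1 - m = m + 1 by omega]
  | succ n hn ih => rw [Fcount_succ_sub hn, ih]
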